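/- Let Q be a real symmetric positive semidefinite n×n matrix with Q·𝟏 = 0, and let λ₂ > 0 satisfy yᵀQy ≥ λ₂·‖y‖₂² for every y ∈ ℝⁿ with Σ_i y_i = 0. Let Ω be a predefined-time consensus function with data (Ω̂, β, d), and let κ_i ≥ κ > 0 for i = 1,…,n. Let x : [t₀,∞) → ℝⁿ be differentiable with ẋ_i(t) = −κ_i·Ω(|e_i(t)|)/e_i(t) if e_i(t) ≠ 0 and ẋ_i(t) = 0 if e_i(t) = 0, where e(t) = Q·x(t). Then for all t ≥ t₀ + 1/(κ·λ₂·β(n)^{2−d}), x_1(t) = x_2(t) = ⋯ = x_n(t); i.e. consensus is reached in a fixed time bounded by 1/(κ·λ₂·β(n)^{2−d}), independently of x(t₀). -/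

import Mathlib

/-!
Take the Lyapunov function `V = xᵀQx`. Along the protocol `V̇ = -2 Σ_{e_i ≠ 0} κ_i Ω(|e_i|)`, and
centring `x` at its mean turns the Rayleigh bound into `λ₂ V ≤ ‖e‖²`. If `Ω(0) = 0`, the defining
inequality of `Ω` then gives `Ẇ ≤ -2K Ω̂(√W)` for `W = β(n)² λ₂ V` and `K = κ λ₂ β(n)^{2-d}`, so
`∫₀^{√W} z / Ω̂(z) dz`, which starts at most `1`, drops at rate at least `K` while `W > 0`:
`V` vanishes by time `t₀ + 1/K`, and `V = 0` means consensus. If `Ω(0) > 0`, then `V̇ ≤ -2κΩ(0)`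
while `V > 0` but `V̇ = 0` at the zeros of `V`; by Darboux's theorem a differentiable solution
cannot pass from one regime to the other, so `V` vanishes from the start.
-/

open Matrix MeasureTheory

def IsPredefinedTimeConsensusFunction (Ω Ωhat : ℝ → ℝ) (β : ℕ → ℝ) (d : ℝ) : Prop :=
  Monotone Ω ∧ (∀ z : ℝ, 0 ≤ z → 0 ≤ Ω z) ∧
  MonotoneOn Ωhat (Set.Ici 0) ∧ (∀ z : ℝ, 0 < z → 0 < Ωhat z) ∧
  ContinuousOn (fun z => Ωhat z / z) (Set.Ioi 0) ∧
  Antitone β ∧ (∀ n : ℕ, 0 < β n) ∧ 1 ≤ d ∧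
  (∀ n : ℕ, 1 ≤ n → ∀ x : Fin n → ℝ, (∀ i, 0 ≤ x i) →
    Ωhat (β n * Real.sqrt (∑ i, x i ^ 2)) ≤ β n ^ d * ∑ i, Ω (x i)) ∧
  (∫ z in Set.Ioi (0:ℝ), z / Ωhat z) = 1

open Set

section Laplacian

variable {ι : Type*} [Fintype ι] {Q : Matrix ι ι ℝ}

theorem Matrix.IsSymm.dotProduct_mulVec_comm (hQ : Q.IsSymm) (a b : ι → ℝ) :
    a ⬝ᵥ Q *ᵥ b = b ⬝ᵥ Q *ᵥ a := by
  simpa only [hQ.eq] using dotProduct_transpose_mulVec Q a b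

theorem HasDerivAt.dotProduct_mulVec_self {x : ℝ → ι → ℝ} {v : ι → ℝ} {t : ℝ}
    (hQ : Q.IsSymm) (hx : HasDerivAt x v t) :
    HasDerivAt (fun s => x s ⬝ᵥ Q *ᵥ x s) (2 * (v ⬝ᵥ Q *ᵥ x t)) t := by
  have hQx : HasDerivAt (fun s => Q *ᵥ x s) (Q *ᵥ v) t :=
    Q.mulVecLin.toContinuousLinearMap.hasFDerivAt.comp_hasDerivAt t hx
  have hsum := HasDerivAt.fun_sum (u := Finset.univ) fun i _ =>
    (hasDerivAt_pi.1 hx i).mul (hasDerivAt_pi.1 hQx i)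
  refine hsum.congr_deriv ?_
  rw [Finset.sum_add_distrib, two_mul]
  exact congrArg _ (hQ.dotProduct_mulVec_comm (x t) v)

theorem sub_const_dotProduct_mulVec (hQ : Q.IsSymm) (hQ1 : Q *ᵥ (fun _ => (1 : ℝ)) = 0)
    (y : ι → ℝ) (c : ℝ) : (fun i => y i - c) ⬝ᵥ Q *ᵥ y = y ⬝ᵥ Q *ᵥ y := by
  have h1 : (fun _ => (1 : ℝ)) ⬝ᵥ Q *ᵥ y = 0 := by
    rw [hQ.dotProduct_mulVec_comm, hQ1, dotProduct_zero]
  have : (fun i => y i - c) = y - c • (fun _ => (1 : ℝ)) := by ext; simp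
  rw [this, sub_dotProduct, smul_dotProduct, h1, smul_zero, sub_zero]

variable {lam2 : ℝ}

theorem exists_mul_sum_sq_sub_le (hQ : Q.IsSymm) (hQ1 : Q *ᵥ (fun _ => (1 : ℝ)) = 0)
    (hRay : ∀ y : ι → ℝ, ∑ i, y i = 0 → lam2 * ∑ i, y i ^ 2 ≤ y ⬝ᵥ Q *ᵥ y) (y : ι → ℝ) :
    ∃ c, lam2 * ∑ i, (y i - c) ^ 2 ≤ y ⬝ᵥ Q *ᵥ y := by
  set c := (∑ i, y i) / Fintype.card ι
  refine ⟨c, ?_⟩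
  have hsum : ∑ i, (y i - c) = 0 := by
    rw [Finset.sum_sub_distrib, Finset.sum_const, Finset.card_univ, nsmul_eq_mul]
    rcases (Fintype.card ι).eq_zero_or_pos with h | h
    · simp [Fintype.card_eq_zero_iff.1 h]
    · simp only [c]; field_simp; ring
  have hmul : Q *ᵥ (fun i => y i - c) = Q *ᵥ y := by
    have : (fun i => y i - c) = y - c • (fun _ => (1 : ℝ)) := by ext; simp
    rw [this, mulVec_sub, mulVec_smul, hQ1, smul_zero, sub_zero]
  simpa only [hmul, sub_const_dotProduct_mulVec hQ hQ1] using hRay _ hsum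

theorem dotProduct_mulVec_self_nonneg (hQ : Q.IsSymm) (hQ1 : Q *ᵥ (fun _ => (1 : ℝ)) = 0)
    (hlam2 : 0 ≤ lam2)
    (hRay : ∀ y : ι → ℝ, ∑ i, y i = 0 → lam2 * ∑ i, y i ^ 2 ≤ y ⬝ᵥ Q *ᵥ y) (y : ι → ℝ) :
    0 ≤ y ⬝ᵥ Q *ᵥ y := by
  obtain ⟨c, hc⟩ := exists_mul_sum_sq_sub_le hQ hQ1 hRay y
  exact le_trans (by positivity) hc

theorem eq_of_dotProduct_mulVec_self_eq_zero (hQ : Q.IsSymm)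
    (hQ1 : Q *ᵥ (fun _ => (1 : ℝ)) = 0) (hlam2 : 0 < lam2)
    (hRay : ∀ y : ι → ℝ, ∑ i, y i = 0 → lam2 * ∑ i, y i ^ 2 ≤ y ⬝ᵥ Q *ᵥ y) {y : ι → ℝ}
    (hy : y ⬝ᵥ Q *ᵥ y = 0) (i j : ι) : y i = y j := by
  obtain ⟨c, hc⟩ := exists_mul_sum_sq_sub_le hQ hQ1 hRay y
  have hzero : ∑ k, (y k - c) ^ 2 = 0 :=
    le_antisymm (nonpos_of_mul_nonpos_right (hc.trans hy.le) hlam2) (by positivity)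
  have hc' : ∀ k, y k = c := fun k => by
    rw [Finset.sum_eq_zero_iff_of_nonneg fun k _ => sq_nonneg _] at hzero
    linarith [pow_eq_zero_iff two_ne_zero |>.1 (hzero k (Finset.mem_univ k))]
  rw [hc' i, hc' j]

theorem mul_dotProduct_mulVec_self_le (hQ : Q.IsSymm)
    (hQ1 : Q *ᵥ (fun _ => (1 : ℝ)) = 0) (hlam2 : 0 ≤ lam2)
    (hRay : ∀ y : ι → ℝ, ∑ i, y i = 0 → lam2 * ∑ i, y i ^ 2 ≤ y ⬝ᵥ Q *ᵥ y) (y : ι → ℝ) :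
    lam2 * (y ⬝ᵥ Q *ᵥ y) ≤ ∑ i, (Q *ᵥ y) i ^ 2 := by
  obtain ⟨c, hc⟩ := exists_mul_sum_sq_sub_le hQ hQ1 hRay y
  set V := y ⬝ᵥ Q *ᵥ y
  set E := ∑ i, (Q *ᵥ y) i ^ 2
  have hE : 0 ≤ E := by positivity
  have hCS : V ^ 2 ≤ (∑ i, (y i - c) ^ 2) * E := by
    rw [show V = _ from (sub_const_dotProduct_mulVec hQ hQ1 y c).symm]
    exact Finset.sum_mul_sq_le_sq_mul_sq _ _ _
  rcases le_or_gt V 0 with hV | hV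
  · nlinarith
  · have : lam2 * V ^ 2 ≤ V * E := by
      nlinarith [mul_le_mul_of_nonneg_left hCS hlam2, mul_le_mul_of_nonneg_right hc hE]
    nlinarith

end Laplacian

section Protocol

variable {ι : Type*} [Fintype ι] (κ : ι → ℝ) (Ω : ℝ → ℝ)

noncomputable def consensusVelocity (e : ι → ℝ) : ι → ℝ :=
  fun i => if e i = 0 then 0 else -(κ i * Ω |e i| / e i)

noncomputable def dissipation (e : ι → ℝ) : ℝ :=
  ∑ i, if e i = 0 then 0 else κ i * Ω |e i|

variable {κ Ω}

theorem consensusVelocity_dotProduct (e : ι → ℝ) :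
    consensusVelocity κ Ω e ⬝ᵥ e = -dissipation κ Ω e := by
  rw [dotProduct, dissipation, ← Finset.sum_neg_distrib]
  refine Finset.sum_congr rfl fun i _ => ?_
  by_cases he : e i = 0 <;> simp [consensusVelocity, he]

theorem mul_le_dissipation_of_ne_zero {k : ℝ} (hk : 0 ≤ k) (hκ : ∀ i, k ≤ κ i)
    (hΩ : Monotone Ω) (hΩnn : ∀ z, 0 ≤ z → 0 ≤ Ω z) {e : ι → ℝ} (he : e ≠ 0) :
    k * Ω 0 ≤ dissipation κ Ω e := by
  obtain ⟨i, hi⟩ := Function.ne_iff.1 he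
  have hterm : ∀ j, 0 ≤ if e j = 0 then 0 else κ j * Ω |e j| := fun j => by
    split_ifs
    exacts [le_rfl, mul_nonneg (hk.trans (hκ j)) (hΩnn _ (abs_nonneg _))]
  calc k * Ω 0 ≤ κ i * Ω |e i| :=
        mul_le_mul (hκ i) (hΩ (abs_nonneg _)) (hΩnn 0 le_rfl) (hk.trans (hκ i))
    _ = if e i = 0 then 0 else κ i * Ω |e i| := (if_neg hi).symm
    _ ≤ dissipation κ Ω e := Finset.single_le_sum (fun j _ => hterm j) (Finset.mem_univ i)

theorem mul_sum_le_dissipation {k : ℝ} (hκ : ∀ i, k ≤ κ i) (hΩnn : ∀ z, 0 ≤ z → 0 ≤ Ω z)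
    (hΩ0 : Ω 0 = 0) (e : ι → ℝ) : k * ∑ i, Ω |e i| ≤ dissipation κ Ω e := by
  rw [Finset.mul_sum]
  refine Finset.sum_le_sum fun i _ => ?_
  split_ifs with he
  · simp [he, hΩ0]
  · exact mul_le_mul_of_nonneg_right (hκ i) (hΩnn _ (abs_nonneg _))

theorem HasDerivAt.dotProduct_mulVec_self_consensusVelocity {Q : Matrix ι ι ℝ}
    {x : ℝ → ι → ℝ} {t : ℝ} (hQ : Q.IsSymm)
    (hx : HasDerivAt x (consensusVelocity κ Ω (Q *ᵥ x t)) t) :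
    HasDerivAt (fun s => x s ⬝ᵥ Q *ᵥ x s) (-2 * dissipation κ Ω (Q *ᵥ x t)) t :=
  (hx.dotProduct_mulVec_self hQ).congr_deriv (by rw [consensusVelocity_dotProduct]; ring)

end Protocol

theorem Convex.antitoneOn_of_hasDerivAt_nonpos {D : Set ℝ} (hD : Convex ℝ D) {f f' : ℝ → ℝ}
    (hf : ∀ s ∈ D, HasDerivAt f (f' s) s) (hf' : ∀ s ∈ D, f' s ≤ 0) : AntitoneOn f D :=
  antitoneOn_of_hasDerivWithinAt_nonpos hD
    (fun s hs => (hf s hs).continuousAt.continuousWithinAt)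
    (fun s hs => (hf s (interior_subset hs)).hasDerivWithinAt)
    (fun s hs => hf' s (interior_subset hs))

section SettlingTime

variable {f : ℝ → ℝ}

theorem hasDerivAt_integral_div (hf : ∀ z, 0 < z → 0 < f z)
    (hfc : ContinuousOn (fun z => f z / z) (Ioi 0))
    (hfi : IntegrableOn (fun z => z / f z) (Ioi 0)) {u : ℝ} (hu : 0 < u) :
    HasDerivAt (fun u => ∫ z in (0 : ℝ)..u, z / f z) (u / f u) u := by
  have hcont : ContinuousOn (fun z => z / f z) (Ioi 0) :=
    (hfc.inv₀ fun z hz => (div_pos (hf z hz) hz).ne').congr fun z _ => (inv_div _ _).symm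
  refine intervalIntegral.integral_hasDerivAt_right ?_
    (hcont.stronglyMeasurableAtFilter isOpen_Ioi u hu) (hcont.continuousAt (Ioi_mem_nhds hu))
  exact (intervalIntegrable_iff_integrableOn_Ioc_of_le hu.le).2
    (hfi.mono_set Ioc_subset_Ioi_self)

theorem integral_div_pos (hf : ∀ z, 0 < z → 0 < f z)
    (hfi : IntegrableOn (fun z => z / f z) (Ioi 0)) {u : ℝ} (hu : 0 < u) :
    0 < ∫ z in (0 : ℝ)..u, z / f z :=
  intervalIntegral.intervalIntegral_pos_of_pos_on
    ((intervalIntegrable_iff_integrableOn_Ioc_of_le hu.le).2 (hfi.mono_set Ioc_subset_Ioi_self))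
    (fun z hz => div_pos hz.1 (hf z hz.1)) hu

theorem integral_div_le_integral_Ioi (hf : ∀ z, 0 < z → 0 < f z)
    (hfi : IntegrableOn (fun z => z / f z) (Ioi 0)) {u : ℝ} (hu : 0 ≤ u) :
    ∫ z in (0 : ℝ)..u, z / f z ≤ ∫ z in Ioi 0, z / f z := by
  rw [intervalIntegral.integral_of_le hu]
  refine setIntegral_mono_set hfi ?_ Ioc_subset_Ioi_self.eventuallyLE
  exact (ae_restrict_iff' measurableSet_Ioi).2 (.of_forall fun z hz => (div_pos hz (hf z hz)).le)

/-- Along `V' ≤ -2K f(√V)` the quantity `∫₀^{√V} z / f z dz` decreases at rate at least `K`. -/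
theorem eq_zero_of_hasDerivAt_le_neg_comp_sqrt (hf : ∀ z, 0 < z → 0 < f z)
    (hfc : ContinuousOn (fun z => f z / z) (Ioi 0))
    (hfi : IntegrableOn (fun z => z / f z) (Ioi 0)) {V V' : ℝ → ℝ} {K a t : ℝ} (hK : 0 < K)
    (hV : ∀ s, a ≤ s → HasDerivAt V (V' s) s) (hV0 : ∀ s, 0 ≤ V s)
    (hdecay : ∀ s, a ≤ s → 0 < V s → V' s ≤ -2 * K * f √(V s))
    (ht : a + (∫ z in Ioi 0, z / f z) / K ≤ t) : V t = 0 := by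
  set F : ℝ → ℝ := fun u => ∫ z in (0 : ℝ)..u, z / f z
  by_contra hVt
  have hVt : 0 < V t := (hV0 t).lt_of_ne' hVt
  have hat : a ≤ t := le_trans (le_add_of_nonneg_right (div_nonneg
    (setIntegral_nonneg measurableSet_Ioi fun z hz => (div_pos hz (hf z hz)).le) hK.le)) ht
  have hVanti : AntitoneOn V (Ici a) := by
    refine (convex_Ici a).antitoneOn_of_hasDerivAt_nonpos (fun s hs => hV s hs) fun s hs => ?_
    rcases (hV0 s).eq_or_lt with hVs | hVs
    · exact ((IsLocalMin.hasDerivAt_eq_zero (.of_forall fun y => hVs ▸ hV0 y)) (hV s hs)).le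
    · exact (hdecay s hs hVs).trans
        (by nlinarith [hf _ (Real.sqrt_pos.2 hVs)])
  have hVpos : ∀ s ∈ Icc a t, 0 < V s := fun s hs =>
    hVt.trans_le (hVanti hs.1 (hat : t ∈ Ici a) hs.2)
  have hθ : AntitoneOn (fun s => F √(V s) + s * K) (Icc a t) := by
    refine (convex_Icc a t).antitoneOn_of_hasDerivAt_nonpos
      (f' := fun s => √(V s) / f √(V s) * (V' s / (2 * √(V s))) + K) (fun s hs => ?_)
      fun s hs => ?_
    · have hsq := Real.sqrt_pos.2 (hVpos s hs)
      exact ((hasDerivAt_integral_div hf hfc hfi hsq).comp s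
        ((hV s hs.1).sqrt (hVpos s hs).ne')).add (hasDerivAt_mul_const K)
    · have hsq := Real.sqrt_pos.2 (hVpos s hs)
      have hfs := hf _ hsq
      have : √(V s) / f √(V s) * (V' s / (2 * √(V s))) = V' s / (2 * f √(V s)) := by
        field_simp
      have hrate : V' s / (2 * f √(V s)) ≤ -K := by
        rw [div_le_iff₀ (by positivity)]; linarith [hdecay s hs.1 (hVpos s hs)]
      linarith
  have h1 := hθ ⟨le_rfl, hat⟩ ⟨hat, le_rfl⟩ hat
  have h2 := integral_div_pos hf hfi (Real.sqrt_pos.2 hVt)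
  have h3 := integral_div_le_integral_Ioi hf hfi (Real.sqrt_nonneg (V a))
  have h4 : ∫ z in Ioi 0, z / f z ≤ K * (t - a) := by
    rw [← div_le_iff₀' hK]; linarith
  simp only [F] at h1
  linarith

end SettlingTime

/-- `V'` is `0` at the zeros (minima) of `V` and `≤ -c` elsewhere; by Darboux it cannot switch
between the two, and it cannot stay `≤ -c` forever since `V ≥ 0`. -/
theorem eq_zero_of_hasDerivAt_le_neg_const {V V' : ℝ → ℝ} {a c t : ℝ} (hc : 0 < c)
    (hV : ∀ s, a ≤ s → HasDerivAt V (V' s) s) (hV0 : ∀ s, 0 ≤ V s)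
    (hdecay : ∀ s, a ≤ s → 0 < V s → V' s ≤ -c) (hat : a ≤ t) : V t = 0 := by
  have hgap : ∀ s, a ≤ s → V' s = 0 ∨ V' s ≤ -c := fun s hs => by
    rcases (hV0 s).eq_or_lt with hVs | hVs
    · exact .inl ((IsLocalMin.hasDerivAt_eq_zero (.of_forall fun y => hVs ▸ hV0 y)) (hV s hs))
    · exact .inr (hdecay s hs hVs)
  by_contra hVt
  have hVt : 0 < V t := (hV0 t).lt_of_ne' hVt
  have hall : ∀ s ∈ Ici t, V' s + c ≤ 0 := fun s hs => by
    rcases hgap s (hat.trans hs) with h0 | h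
    · obtain ⟨ξ, hξ, hξc⟩ := exists_hasDerivWithinAt_eq_of_gt_of_lt (m := -c / 2) hs
        (fun r hr => (hV r (hat.trans hr.1)).hasDerivWithinAt)
        (by linarith [hdecay t hat hVt]) (by linarith)
      rcases hgap ξ (hat.trans hξ.1.le) with h | h <;> linarith
    · linarith
  have hanti : AntitoneOn (fun s => V s + s * c) (Ici t) :=
    (convex_Ici t).antitoneOn_of_hasDerivAt_nonpos
      (fun s hs => (hV s (hat.trans hs)).add (hasDerivAt_mul_const c)) hall
  set s := t + V t / c + 1
  have hcs : s * c = t * c + V t + c := by simp only [s]; field_simp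
  have hts : t ≤ s := by linarith [div_nonneg (hV0 t) hc.le]
  linarith [hanti (le_refl t) hts hts, hV0 s]

theorem IsPredefinedTimeConsensusFunction.le_mul_sum_abs {Ω Ωhat : ℝ → ℝ} {β : ℕ → ℝ} {d : ℝ}
    (hΩ : IsPredefinedTimeConsensusFunction Ω Ωhat β d) {n : ℕ} (hn : 1 ≤ n) (e : Fin n → ℝ) :
    Ωhat (β n * √(∑ i, e i ^ 2)) ≤ β n ^ d * ∑ i, Ω |e i| := by
  obtain ⟨-, -, -, -, -, -, -, -, hsup, -⟩ := hΩ
  simpa only [sq_abs] using hsup n hn (fun i => |e i|) fun i => abs_nonneg _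

theorem IsPredefinedTimeConsensusFunction.mul_le_dissipation {Ω Ωhat : ℝ → ℝ} {β : ℕ → ℝ}
    {d : ℝ} (hΩ : IsPredefinedTimeConsensusFunction Ω Ωhat β d) (hΩ0 : Ω 0 = 0) {n : ℕ}
    (hn : 1 ≤ n) {κ : Fin n → ℝ} {k : ℝ} (hk : 0 ≤ k) (hκ : ∀ i, k ≤ κ i) {lam2 v : ℝ}
    (hlam2 : 0 ≤ lam2) (e : Fin n → ℝ) (hv : lam2 * v ≤ ∑ i, e i ^ 2) :
    k * lam2 * β n ^ (2 - d) * Ωhat √(β n ^ 2 * lam2 * v)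
      ≤ β n ^ 2 * lam2 * dissipation κ Ω e := by
  have hsup := hΩ.le_mul_sum_abs hn e
  obtain ⟨-, hΩnn, hΩhat, -, -, -, hβ, -⟩ := hΩ
  have hβn := hβ n
  have hsqrt : √(β n ^ 2 * lam2 * v) ≤ β n * √(∑ i, e i ^ 2) :=
    calc √(β n ^ 2 * lam2 * v) ≤ √(β n ^ 2 * ∑ i, e i ^ 2) := by
          rw [mul_assoc]; exact Real.sqrt_le_sqrt (mul_le_mul_of_nonneg_left hv (sq_nonneg _))
      _ = β n * √(∑ i, e i ^ 2) := by rw [Real.sqrt_mul (sq_nonneg _), Real.sqrt_sq hβn.le]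
  have hpow : β n ^ (2 - d) * β n ^ d = β n ^ 2 := by
    rw [← Real.rpow_add hβn, sub_add_cancel, Real.rpow_two]
  calc k * lam2 * β n ^ (2 - d) * Ωhat √(β n ^ 2 * lam2 * v)
      ≤ k * lam2 * β n ^ (2 - d) * (β n ^ d * ∑ i, Ω |e i|) := by
        refine mul_le_mul_of_nonneg_left ((hΩhat (Real.sqrt_nonneg _) ?_ hsqrt).trans
          hsup) (by positivity)
        exact mul_nonneg hβn.le (Real.sqrt_nonneg _)
    _ = β n ^ 2 * lam2 * (k * ∑ i, Ω |e i|) := by rw [← hpow]; ring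
    _ ≤ β n ^ 2 * lam2 * dissipation κ Ω e :=
        mul_le_mul_of_nonneg_left (mul_sum_le_dissipation hκ hΩnn hΩ0 e) (by positivity)

theorem stmt14_general {n : ℕ} (Q : Matrix (Fin n) (Fin n) ℝ)
    (hQsymm : Q.IsSymm)
    (hQ1 : Q.mulVec (fun _ => (1:ℝ)) = 0)
    (lam2 : ℝ) (hlam2 : 0 < lam2)
    (hRay : ∀ y : Fin n → ℝ, (∑ i, y i) = 0 →
      lam2 * (∑ i, y i ^ 2) ≤ y ⬝ᵥ Q.mulVec y)
    (Ω Ωhat : ℝ → ℝ) (β : ℕ → ℝ) (d : ℝ)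
    (hΩ : IsPredefinedTimeConsensusFunction Ω Ωhat β d)
    (κ : Fin n → ℝ) (k : ℝ) (hk : 0 < k) (hκ : ∀ i, k ≤ κ i)
    (t₀ : ℝ) (x : ℝ → Fin n → ℝ)
    (hx : ∀ t, t₀ ≤ t →
      HasDerivAt x (fun i => if Q.mulVec (x t) i = 0 then 0
        else -(κ i * Ω |Q.mulVec (x t) i| / Q.mulVec (x t) i)) t) :
    ∀ t, t₀ + 1 / (k * lam2 * β n ^ ((2:ℝ) - d)) ≤ t → ∀ i j, x t i = x t j := by
  intro t ht i j
  have ⟨hΩmono, hΩnn, _, hΩhatpos, hΩhatcont, _, hβ, _, _, hint⟩ := hΩ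
  set V : ℝ → ℝ := fun s => x s ⬝ᵥ Q *ᵥ x s
  have hV : ∀ s, t₀ ≤ s → HasDerivAt V (-2 * dissipation κ Ω (Q *ᵥ x s)) s := fun s hs =>
    HasDerivAt.dotProduct_mulVec_self_consensusVelocity hQsymm (hx s hs)
  have hV0 : ∀ s, 0 ≤ V s := fun s => dotProduct_mulVec_self_nonneg hQsymm hQ1 hlam2.le hRay (x s)
  suffices V t = 0 from eq_of_dotProduct_mulVec_self_eq_zero hQsymm hQ1 hlam2 hRay this i j
  have hβn := hβ n
  have hK : 0 < k * lam2 * β n ^ ((2:ℝ) - d) := by positivity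
  rcases (hΩnn 0 le_rfl).eq_or_lt with hΩ0 | hΩ0
  · have hc : 0 < β n ^ 2 * lam2 := by positivity
    suffices β n ^ 2 * lam2 * V t = 0 by simpa [hc.ne'] using this
    refine eq_zero_of_hasDerivAt_le_neg_comp_sqrt (V := fun s => β n ^ 2 * lam2 * V s) hΩhatpos
      hΩhatcont (integrable_of_integral_eq_one hint) hK (fun s hs => (hV s hs).const_mul _)
      (fun s => mul_nonneg hc.le (hV0 s)) (fun s _ _ => ?_) (by rwa [hint])
    have := hΩ.mul_le_dissipation hΩ0.symm i.pos hk.le hκ hlam2.le (Q *ᵥ x s)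
      (mul_dotProduct_mulVec_self_le hQsymm hQ1 hlam2.le hRay (x s))
    linarith
  · refine eq_zero_of_hasDerivAt_le_neg_const (c := 2 * (k * Ω 0)) (by positivity) hV hV0
      (fun s _ hVs => ?_) (by linarith [one_div_pos.2 hK])
    have he : Q *ᵥ x s ≠ 0 := fun he => hVs.ne' (by simp [V, he])
    linarith [mul_le_dissipation_of_ne_zero hk.le hκ hΩmono hΩnn he]

/-- fixed-time part of Theorem 3: protocol (ii) on a static network with
Laplacian Q and algebraic connectivity at least λ₂ reaches consensus in a fixed time
bounded by 1/(κλ₂β(n)^{2−d}), independently of the initial condition. -/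
theorem stmt14 {n : ℕ} (hn : 1 ≤ n) (Q : Matrix (Fin n) (Fin n) ℝ)
    (hQsymm : Q.IsSymm) (hQpsd : Q.PosSemidef)
    (hQ1 : Q.mulVec (fun _ => (1:ℝ)) = 0)
    (lam2 : ℝ) (hlam2 : 0 < lam2)
    (hRay : ∀ y : Fin n → ℝ, (∑ i, y i) = 0 →
      lam2 * (∑ i, y i ^ 2) ≤ y ⬝ᵥ Q.mulVec y)
    (Ω Ωhat : ℝ → ℝ) (β : ℕ → ℝ) (d : ℝ)
    (hΩ : IsPredefinedTimeConsensusFunction Ω Ωhat β d)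
    (κ : Fin n → ℝ) (k : ℝ) (hk : 0 < k) (hκ : ∀ i, k ≤ κ i)
    (t₀ : ℝ) (x : ℝ → Fin n → ℝ)
    (hx : ∀ t, t₀ ≤ t →
      HasDerivAt x (fun i => if Q.mulVec (x t) i = 0 then 0
        else -(κ i * Ω |Q.mulVec (x t) i| / Q.mulVec (x t) i)) t) :
    ∀ t, t₀ + 1 / (k * lam2 * β n ^ ((2:ℝ) - d)) ≤ t → ∀ i j, x t i = x t j :=
  stmt14_general Q hQsymm hQ1 lam2 hlam2 hRay Ω Ωhat β d hΩ κ k hk hκ t₀ x hx
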